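/- Let (τ_n)_{n≥1} be a nonincreasing sequence of reals in [0,1], (d_n) nonnegative reals, and (γ_n) ⊆ (0,1], satisfying for all N ≥ 0, K ≥ 2, 1 ≤ m < K the Hilbert-space master inequality ∏_{i=1}^K τ_{N+i}² ≤ (∏_{i=1}^K γ_{N+i})^{-2} (K/m)^m (K/(K−m))^{K−m} τ_{N+1}^{2m} d_m^{2(K−m)}. Then for every n ≥ 2: τ_n ≤ √2 (∏_{i=1}^n γ_i^{1/n})^{-1} min_{1 ≤ m < n} d_m^{(n−m)/n}; in particular τ_{2ℓ} ≤ √2 (∏_{i=1}^{2ℓ} γ_i^{1/(2ℓ)})^{-1} √(d_ℓ) for every ℓ ≥ 1. -/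

import Mathlib

/-!
Take `N = 0`, `K = n` in the master inequality. Since `τ` is nonincreasing, its left side is at
least `τ n ^ (2 n)`; on the right, `τ 1 ≤ 1`, and weighted AM-GM with weights `m / n`,
`(n - m) / n` bounds `(n / m) ^ m (n / (n - m)) ^ (n - m)` by `2 ^ n`. Taking `2 n`-th roots gives
the first bound, and `n = 2 ℓ`, `m = ℓ` the second.
-/

open Finset

lemma inv_rpow_self_mul_inv_rpow_self_le_two {w₁ w₂ : ℝ} (hw₁ : 0 < w₁) (hw₂ : 0 < w₂)
    (hw : w₁ + w₂ = 1) : w₁⁻¹ ^ w₁ * w₂⁻¹ ^ w₂ ≤ 2 := by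
  calc w₁⁻¹ ^ w₁ * w₂⁻¹ ^ w₂ ≤ w₁ * w₁⁻¹ + w₂ * w₂⁻¹ :=
        Real.geom_mean_le_arith_mean2_weighted hw₁.le hw₂.le (by positivity) (by positivity) hw
    _ = 2 := by rw [mul_inv_cancel₀ hw₁.ne', mul_inv_cancel₀ hw₂.ne']; norm_num

lemma div_pow_mul_div_sub_pow_le_two_pow {n m : ℕ} (hm : 1 ≤ m) (hmn : m < n) :
    ((n : ℝ) / m) ^ m * ((n : ℝ) / (n - m)) ^ (n - m) ≤ 2 ^ n := by
  have hm' : (0 : ℝ) < m := by exact_mod_cast hm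
  have hn' : (0 : ℝ) < n := hm'.trans (by exact_mod_cast hmn)
  have hk' : (0 : ℝ) < (n - m : ℕ) := by exact_mod_cast Nat.sub_pos_of_lt hmn
  have root_pow {x : ℝ} (hx : 0 ≤ x) (k : ℕ) : (x ^ ((k : ℝ) / n)) ^ n = x ^ k := by
    rw [← Real.rpow_natCast (x ^ _) n, ← Real.rpow_mul hx, div_mul_cancel₀ _ hn'.ne',
      Real.rpow_natCast]
  have key := inv_rpow_self_mul_inv_rpow_self_le_two (div_pos hm' hn') (div_pos hk' hn')
    (by rw [Nat.cast_sub hmn.le]; field_simp; ring)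
  rw [inv_div, inv_div] at key
  rw [← Nat.cast_sub hmn.le]
  calc ((n : ℝ) / m) ^ m * ((n : ℝ) / (n - m : ℕ)) ^ (n - m)
      = (((n : ℝ) / m) ^ ((m : ℝ) / n) *
          ((n : ℝ) / (n - m : ℕ)) ^ (((n - m : ℕ) : ℝ) / n)) ^ n := by
        rw [mul_pow, root_pow (by positivity), root_pow (by positivity)]
    _ ≤ 2 ^ n := pow_le_pow_left₀ (by positivity) key n

lemma pow_le_prod_of_antitone {τ : ℕ → ℝ} (hτ0 : ∀ n, 0 ≤ τ n) (hτ : Antitone τ) (n : ℕ) :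
    τ n ^ (2 * n) ≤ ∏ i ∈ Icc 1 n, τ i ^ 2 := by
  calc τ n ^ (2 * n) = ∏ _i ∈ Icc 1 n, τ n ^ 2 := by
        rw [prod_const, Nat.card_Icc, ← pow_mul, Nat.add_sub_cancel, mul_comm]
    _ ≤ ∏ i ∈ Icc 1 n, τ i ^ 2 := prod_le_prod (fun _ _ => by positivity) fun i hi =>
        pow_le_pow_left₀ (hτ0 n) (hτ (mem_Icc.mp hi).2) 2

lemma pow_two_mul_le_of_master {τ d γ : ℕ → ℝ} {m : ℕ} (hτ0 : ∀ n, 0 ≤ τ n) (hτ1 : τ 1 ≤ 1)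
    (hτ : Antitone τ) (hd : 0 ≤ d m) {n : ℕ} (hm : 1 ≤ m) (hmn : m < n)
    (hmaster : ∏ i ∈ Icc 1 n, τ i ^ 2 ≤ ((∏ i ∈ Icc 1 n, γ i)⁻¹) ^ 2 *
      ((n : ℝ) / m) ^ m * ((n : ℝ) / (n - m)) ^ (n - m) * τ 1 ^ (2 * m) * d m ^ (2 * (n - m))) :
    τ n ^ (2 * n) ≤ ((∏ i ∈ Icc 1 n, γ i)⁻¹) ^ 2 * 2 ^ n * d m ^ (2 * (n - m)) := by
  calc τ n ^ (2 * n) ≤ ∏ i ∈ Icc 1 n, τ i ^ 2 := pow_le_prod_of_antitone hτ0 hτ n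
    _ ≤ _ := hmaster
    _ ≤ ((∏ i ∈ Icc 1 n, γ i)⁻¹) ^ 2 * 2 ^ n * 1 * d m ^ (2 * (n - m)) := by
        rw [mul_assoc _ (((n : ℝ) / m) ^ m)]
        gcongr
        · exact pow_nonneg (hτ0 1) _
        · exact div_pow_mul_div_sub_pow_le_two_pow hm hmn
        · exact pow_le_one₀ (hτ0 1) hτ1
    _ = _ := by rw [mul_one]

lemma sqrt_two_mul_inv_prod_rpow_mul_rpow_pow (s : Finset ℕ) {γ : ℕ → ℝ}
    (hγ : ∀ i ∈ s, 0 ≤ γ i) {δ : ℝ} (hδ : 0 ≤ δ) {n m : ℕ} (hn : n ≠ 0) (hmn : m ≤ n) :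
    (√2 * (∏ i ∈ s, γ i ^ ((1 : ℝ) / n))⁻¹ * δ ^ (((n : ℝ) - m) / n)) ^ (2 * n) =
      ((∏ i ∈ s, γ i)⁻¹) ^ 2 * 2 ^ n * δ ^ (2 * (n - m)) := by
  have hn' : (n : ℝ) ≠ 0 := by exact_mod_cast hn
  have hprod : (∏ i ∈ s, γ i ^ ((1 : ℝ) / n)) ^ n = ∏ i ∈ s, γ i := by
    rw [← prod_pow]
    exact prod_congr rfl fun i hi => by rw [one_div, Real.rpow_inv_natCast_pow (hγ i hi) hn]
  have hδpow : (δ ^ (((n : ℝ) - m) / n)) ^ (2 * n) = δ ^ (2 * (n - m)) := by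
    rw [← Real.rpow_natCast _ (2 * n), ← Real.rpow_mul hδ, ← Real.rpow_natCast δ (2 * (n - m))]
    congr 1
    push_cast [Nat.cast_sub hmn]
    field_simp
  have hsqrt : √2 ^ (2 * n) = 2 ^ n := by rw [pow_mul, Real.sq_sqrt zero_le_two]
  rw [mul_pow, mul_pow, hδpow, hsqrt, ← hprod]
  ring

theorem stmt_13 (τ d γ : ℕ → ℝ)
    (hτ0 : ∀ n, 0 ≤ τ n) (hτ1 : ∀ n, τ n ≤ 1)
    (hmono : ∀ m n : ℕ, m ≤ n → τ n ≤ τ m)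
    (hd : ∀ n, 0 ≤ d n)
    (hγ : ∀ n, 0 < γ n ∧ γ n ≤ 1)
    (hmaster : ∀ N K m : ℕ, 2 ≤ K → 1 ≤ m → m < K →
      ∏ i ∈ Finset.Icc 1 K, (τ (N + i)) ^ 2 ≤
        ((∏ i ∈ Finset.Icc 1 K, γ (N + i))⁻¹) ^ 2 *
          ((K : ℝ) / m) ^ m * ((K : ℝ) / (K - m : ℝ)) ^ (K - m) *
          (τ (N + 1)) ^ (2 * m) * (d m) ^ (2 * (K - m))) :
    (∀ n m : ℕ, 2 ≤ n → 1 ≤ m → m < n →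
      τ n ≤ Real.sqrt 2 * (∏ i ∈ Finset.Icc 1 n, (γ i) ^ ((1 : ℝ) / n))⁻¹ *
        (d m) ^ (((n : ℝ) - m) / n)) ∧
    (∀ ℓ : ℕ, 1 ≤ ℓ →
      τ (2 * ℓ) ≤ Real.sqrt 2 *
        (∏ i ∈ Finset.Icc 1 (2 * ℓ), (γ i) ^ ((1 : ℝ) / (2 * ℓ)))⁻¹ *
        Real.sqrt (d ℓ)) := by
  have hτ : Antitone τ := fun a b h => hmono a b h
  have main : ∀ n m : ℕ, 2 ≤ n → 1 ≤ m → m < n →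
      τ n ≤ √2 * (∏ i ∈ Icc 1 n, γ i ^ ((1 : ℝ) / n))⁻¹ * d m ^ (((n : ℝ) - m) / n) := by
    intro n m hn hm hmn
    have hbound := pow_two_mul_le_of_master (γ := γ) hτ0 (hτ1 1) hτ (hd m) hm hmn
      (by simpa only [zero_add] using hmaster 0 n m hn hm hmn)
    rw [← sqrt_two_mul_inv_prod_rpow_mul_rpow_pow _ (fun i _ => (hγ i).1.le) (hd m)
      (by omega) hmn.le] at hbound
    have hrhs : 0 ≤ √2 * (∏ i ∈ Icc 1 n, γ i ^ ((1 : ℝ) / n))⁻¹ * d m ^ (((n : ℝ) - m) / n) :=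
      mul_nonneg (mul_nonneg (Real.sqrt_nonneg 2) (inv_nonneg.2 (prod_nonneg fun i _ =>
        Real.rpow_nonneg (hγ i).1.le _))) (Real.rpow_nonneg (hd m) _)
    exact (pow_le_pow_iff_left₀ (hτ0 n) hrhs (by omega)).1 hbound
  refine ⟨main, fun ℓ hℓ => ?_⟩
  have hhalf : (((2 * ℓ : ℕ) : ℝ) - ℓ) / (2 * ℓ : ℕ) = 1 / 2 := by
    have : (ℓ : ℝ) ≠ 0 := by positivity
    push_cast
    field_simp
    ring
  have h := main (2 * ℓ) ℓ (by omega) hℓ (by omega)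
  rw [hhalf, ← Real.sqrt_eq_rpow] at h
  push_cast at h
  exact h
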